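/- Offering channels may be retyped at supertypes: if Γ ⊨ Ψ_a, Θ' :: (a:A'), Δ' and A' ≤ B for a linear type B, then Γ ⊨ Ψ_a, Θ' :: (a:B), Δ'. -/
import Mathlib


/-! # Session types of SILL_S≤ -/

abbrev Label := String

/-- Session-type syntax (shared and linear constructors in one grammar).
Choices are represented by a label set together with a branch function. -/
inductive STy : Type
  | one : STy
  | tensor : STy → STy → STy
  | lolli : STy → STy → STy
  | ichoice : Set Label → (Label → STy) → STy
  | echoice : Set Label → (Label → STy) → STy
  | upS : STy → STy      -- ↑ˢ_L  (shared type)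
  | downS : STy → STy    -- ↓ˢ_L  (linear type with shared continuation)
  | upL : STy → STy      -- ↑ᴸ_L
  | downL : STy → STy    -- ↓ᴸ_L

mutual
  /-- `A` is a (well-formed) shared session type. -/
  inductive IsShared : STy → Prop
    | upS {A} : IsLinear A → IsShared (.upS A)
  /-- `A` is a (well-formed) linear session type. -/
  inductive IsLinear : STy → Prop
    | one : IsLinear .one
    | tensor {A B} : IsLinear A → IsLinear B → IsLinear (.tensor A B)
    | lolli {A B} : IsLinear A → IsLinear B → IsLinear (.lolli A B)
    | ichoice {L f} : (∀ l ∈ L, IsLinear (f l)) → IsLinear (.ichoice L f)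
    | echoice {L f} : (∀ l ∈ L, IsLinear (f l)) → IsLinear (.echoice L f)
    | upL {A} : IsLinear A → IsLinear (.upL A)
    | downL {A} : IsLinear A → IsLinear (.downL A)
    | downS {A} : IsShared A → IsLinear (.downS A)
end

/-- The subtyping relation `A ≤ B` on session types. -/
inductive SubT : STy → STy → Prop
  | one : SubT .one .one
  | tensor {A A' B B'} : SubT A A' → SubT B B' → SubT (.tensor A B) (.tensor A' B')
  | lolli {A A' B B'} : SubT A' A → SubT B B' → SubT (.lolli A B) (.lolli A' B')
  | ichoice {L L' f g} : L ⊆ L' → (∀ l ∈ L, SubT (f l) (g l)) →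
      SubT (.ichoice L f) (.ichoice L' g)
  | echoice {L L' f g} : L' ⊆ L → (∀ l ∈ L', SubT (f l) (g l)) →
      SubT (.echoice L f) (.echoice L' g)
  | upS {A B} : SubT A B → SubT (.upS A) (.upS B)
  | downS {A B} : SubT A B → SubT (.downS A) (.downS B)
  | upSL {A B} : SubT A B → SubT (.upS A) (.upL B)
  | downSL {A B} : SubT A B → SubT (.downS A) (.downL B)
  | upL {A B} : SubT A B → SubT (.upL A) (.upL B)
  | downL {A B} : SubT A B → SubT (.downL A) (.downL B)

/-- Extended shared types `Â ::= ⊥ | A_S | ⊤`. -/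
inductive ExtS : Type
  | bot : ExtS
  | ty : STy → ExtS
  | top : ExtS

/-- Subtyping on extended shared types: `⊥ ≤ Â ≤ ⊤`. -/
inductive ExtSub : ExtS → ExtS → Prop
  | bot {Ah} : ExtSub .bot Ah
  | top {Ah} : ExtSub Ah .top
  | ty {A B} : SubT A B → ExtSub (.ty A) (.ty B)

/-- `Â ≤ A` between an extended shared type and a session type. -/
inductive ExtLE : ExtS → STy → Prop
  | bot {A} : ExtLE .bot A
  | ty {B A} : SubT B A → ExtLE (.ty B) A

/-- The subsynchronizing judgment `ssync(A, B, D̂)`. -/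
inductive SSync : STy → STy → ExtS → Prop
  | one {Dh} : SSync .one .one Dh
  | tensor {A A' B B' Dh} : SSync B B' Dh → SSync (.tensor A B) (.tensor A' B') Dh
  | lolli {A A' B B' Dh} : SSync B B' Dh → SSync (.lolli A B) (.lolli A' B') Dh
  | ichoice {L L' f g Dh} : L ⊆ L' → (∀ l ∈ L, SSync (f l) (g l) Dh) →
      SSync (.ichoice L f) (.ichoice L' g) Dh
  | echoice {L L' f g Dh} : L' ⊆ L → (∀ l ∈ L', SSync (f l) (g l) Dh) →
      SSync (.echoice L f) (.echoice L' g) Dh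
  | upL {A A' Dh} : SSync A A' Dh → SSync (.upL A) (.upL A') Dh
  | downL {A A' Dh} : SSync A A' Dh → SSync (.downL A) (.downL A') Dh
  | upS {A A'} : SSync A A' (.ty (.upS A)) → SSync (.upS A) (.upS A') .top
  | downS {A A' Dh} : SSync A A' .top → ExtSub (.ty A) Dh →
      SSync (.downS A) (.downS A') Dh
  | upSL {A A'} : SSync A A' (.ty (.upS A)) → SSync (.upS A) (.upL A') .top
  | downSL {A A' Dh} : SSync A A' .top → ExtSub (.ty A) Dh →
      SSync (.downS A) (.downL A') Dh

/-- The equi-synchronizing judgment: every release happens at exactly the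
type at which the protocol was acquired. -/
inductive ESync : STy → ExtS → Prop
  | one {Dh} : ESync .one Dh
  | tensor {A B Dh} : ESync B Dh → ESync (.tensor A B) Dh
  | lolli {A B Dh} : ESync B Dh → ESync (.lolli A B) Dh
  | ichoice {L f Dh} : (∀ l ∈ L, ESync (f l) Dh) → ESync (.ichoice L f) Dh
  | echoice {L f Dh} : (∀ l ∈ L, ESync (f l) Dh) → ESync (.echoice L f) Dh
  | upL {A Dh} : ESync A Dh → ESync (.upL A) Dh
  | downL {A Dh} : ESync A Dh → ESync (.downL A) Dh
  | upS {A} : ESync A (.ty (.upS A)) → ESync (.upS A) .top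
  | downS {A Dh} : ESync A .top → (Dh = .top ∨ Dh = .ty A) → ESync (.downS A) Dh

/-- A session type is equi-synchronizing when it satisfies the judgment with
the trivial constraint `⊤`. -/
def EquiSync (A : STy) : Prop := ESync A .top

open Classical in
/-- The meet of two session types; `none` plays the role of `⊥`. -/
noncomputable def meetO : STy → STy → Option STy
  | .one, .one => some .one
  | .tensor A B, .tensor A' B' =>
      match meetO A A', meetO B B' with
      | some X, some Y => some (.tensor X Y)
      | _, _ => none
  | .lolli A B, .lolli A' B' =>
      match meetO A A', meetO B B' with
      | some X, some Y => some (.lolli X Y)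
      | _, _ => none
  | .echoice L f, .echoice L' g =>
      if ∀ l ∈ L ∩ L', (meetO (f l) (g l)).isSome then
        some (.echoice (L ∪ L') (fun l =>
          if l ∈ L ∩ L' then (meetO (f l) (g l)).getD .one
          else if l ∈ L then f l else g l))
      else none
  | .ichoice L f, .ichoice L' g =>
      if (L ∩ L').Nonempty ∧ ∀ l ∈ L ∩ L', (meetO (f l) (g l)).isSome then
        some (.ichoice (L ∩ L') (fun l => (meetO (f l) (g l)).getD .one))
      else none
  | .upS A, .upS B => (meetO A B).map .upS
  | .upS A, .upL B => (meetO A B).map .upS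
  | .upL A, .upS B => (meetO A B).map .upS
  | .upL A, .upL B => (meetO A B).map .upL
  | .downS A, .downS B => (meetO A B).map .downS
  | .downS A, .downL B => (meetO A B).map .downS
  | .downL A, .downS B => (meetO A B).map .downS
  | .downL A, .downL B => (meetO A B).map .downL
  | _, _ => none

/-- The meet `Â ∧ B̂` on extended shared types. -/
noncomputable def meetExt : ExtS → ExtS → ExtS
  | .bot, _ => .bot
  | _, .bot => .bot
  | .top, x => x
  | x, .top => x
  | .ty A, .ty B =>
      match meetO A B with
      | some C => .ty C
      | none => .bot
/-! # Processes, typing and configurations of SILL_S≤ -/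

abbrev Chan := String

/-- Process terms of SILL_S≤. -/
inductive Proc : Type
  | fwdLL (x y : Chan)                                    -- x ↔ y (linear)
  | fwdSS (x y : Chan)                                    -- x ↔ y (shared)
  | fwdLS (x y : Chan)                                    -- x ↔ y (linear/shared)
  | spawnL (x : Chan) (X : String) (ys vs ws : List Chan) (Q : Proc)
  | spawnS (x : Chan) (X : String) (ys : List Chan) (Q : Proc)
  | close (x : Chan)
  | wait (x : Chan) (P : Proc)
  | recvCh (y x : Chan) (P : Proc)                        -- y ← recv x ; P
  | sendCh (x y : Chan) (P : Proc)                        -- send x y ; P (y linear)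
  | sendSh (x y : Chan) (P : Proc)                        -- send x y ; P (y shared)
  | branch (x : Chan) (M : Set Label) (br : Label → Proc) -- case x of branches
  | sel (x : Chan) (i : Label) (P : Proc)                 -- x.i ; P
  | acqS (y x : Chan) (P : Proc)                          -- y ← acquire^S x ; P
  | accS (y x : Chan) (P : Proc)                          -- y ← accept^S x ; P
  | relS (y x : Chan) (P : Proc)                          -- y ← release^S x ; P
  | detS (y x : Chan) (P : Proc)                          -- y ← detach^S x ; P
  | acqL (y x : Chan) (P : Proc)
  | accL (y x : Chan) (P : Proc)
  | relL (y x : Chan) (P : Proc)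
  | detL (y x : Chan) (P : Proc)

/-- Renaming of channel names in a process term. -/
def Proc.ren (σ : Chan → Chan) : Proc → Proc
  | .fwdLL x y => .fwdLL (σ x) (σ y)
  | .fwdSS x y => .fwdSS (σ x) (σ y)
  | .fwdLS x y => .fwdLS (σ x) (σ y)
  | .spawnL x X ys vs ws Q => .spawnL (σ x) X (ys.map σ) (vs.map σ) (ws.map σ) (Q.ren σ)
  | .spawnS x X ys Q => .spawnS (σ x) X (ys.map σ) (Q.ren σ)
  | .close x => .close (σ x)
  | .wait x P => .wait (σ x) (P.ren σ)
  | .recvCh y x P => .recvCh (σ y) (σ x) (P.ren σ)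
  | .sendCh x y P => .sendCh (σ x) (σ y) (P.ren σ)
  | .sendSh x y P => .sendSh (σ x) (σ y) (P.ren σ)
  | .branch x M br => .branch (σ x) M (fun l => (br l).ren σ)
  | .sel x i P => .sel (σ x) i (P.ren σ)
  | .acqS y x P => .acqS (σ y) (σ x) (P.ren σ)
  | .accS y x P => .accS (σ y) (σ x) (P.ren σ)
  | .relS y x P => .relS (σ y) (σ x) (P.ren σ)
  | .detS y x P => .detS (σ y) (σ x) (P.ren σ)
  | .acqL y x P => .acqL (σ y) (σ x) (P.ren σ)
  | .accL y x P => .accL (σ y) (σ x) (P.ren σ)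
  | .relL y x P => .relL (σ y) (σ x) (P.ren σ)
  | .detL y x P => .detL (σ y) (σ x) (P.ren σ)

/-- `P.mentions c` holds when the channel name `c` occurs in `P`. -/
def Proc.mentions (c : Chan) : Proc → Prop
  | .fwdLL x y => x = c ∨ y = c
  | .fwdSS x y => x = c ∨ y = c
  | .fwdLS x y => x = c ∨ y = c
  | .spawnL x _ ys vs ws Q => x = c ∨ c ∈ ys ∨ c ∈ vs ∨ c ∈ ws ∨ Q.mentions c
  | .spawnS x _ ys Q => x = c ∨ c ∈ ys ∨ Q.mentions c
  | .close x => x = c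
  | .wait x P => x = c ∨ P.mentions c
  | .recvCh y x P => y = c ∨ x = c ∨ P.mentions c
  | .sendCh x y P => x = c ∨ y = c ∨ P.mentions c
  | .sendSh x y P => x = c ∨ y = c ∨ P.mentions c
  | .branch x _ br => x = c ∨ ∃ l, (br l).mentions c
  | .sel x _ P => x = c ∨ P.mentions c
  | .acqS y x P => y = c ∨ x = c ∨ P.mentions c
  | .accS y x P => y = c ∨ x = c ∨ P.mentions c
  | .relS y x P => y = c ∨ x = c ∨ P.mentions c
  | .detS y x P => y = c ∨ x = c ∨ P.mentions c
  | .acqL y x P => y = c ∨ x = c ∨ P.mentions c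
  | .accL y x P => y = c ∨ x = c ∨ P.mentions c
  | .relL y x P => y = c ∨ x = c ∨ P.mentions c
  | .detL y x P => y = c ∨ x = c ∨ P.mentions c

/-- A linear process definition in the global signature. -/
structure LinDef where
  name : String
  off : Chan
  offTy : STy
  /-- linear parameters `ȳ' : B̄'` -/
  linArgs : List (Chan × STy)
  /-- linear parameters `v̄' : D̄'` that are instantiated with shared channels -/
  linArgs2 : List (Chan × STy)
  /-- shared parameters `w̄' : Ē'` -/
  shArgs : List (Chan × STy)
  body : Proc

/-- A shared process definition in the global signature. -/
structure ShDef where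
  name : String
  off : Chan
  offTy : STy
  shArgs : List (Chan × STy)
  body : Proc

/-- A global signature Σ of process definitions. -/
structure Sig where
  linDefs : List LinDef
  shDefs : List ShDef

/-- Shared contexts Γ of channels with extended shared types. -/
abbrev SCtx := List (Chan × ExtS)
/-- Linear contexts Δ. -/
abbrev LCtx := Multiset (Chan × STy)

mutual
/-- The shared process typing judgment `Γ ⊢ P :: (x : A_S)` of SILL_S≤. -/
inductive TypS (Sg : Sig) : SCtx → Proc → Chan → STy → Prop
  | fwdSS {Γ x y Bh A} : (y, Bh) ∈ Γ → ExtSub Bh (.ty A) →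
      TypS Sg Γ (.fwdSS x y) x A
  | spawnSS {Γ x X ys Q z C d} :
      d ∈ Sg.shDefs → d.name = X →
      List.Forall₂ (fun (y : Chan) (p : Chan × STy) =>
        ∃ Bh, (y, Bh) ∈ Γ ∧ ExtSub Bh (.ty p.2)) ys d.shArgs →
      TypS Sg ((x, .ty d.offTy) :: Γ) Q z C →
      TypS Sg Γ (.spawnS x X ys Q) z C
  | upSR {Γ y x P A} : TypL Sg Γ 0 P y A → TypS Sg Γ (.accS y x P) x (.upS A)

/-- The linear process typing judgment `Γ; Δ ⊢ P :: (x : A_L)` of SILL_S≤. -/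
inductive TypL (Sg : Sig) : SCtx → LCtx → Proc → Chan → STy → Prop
  | fwdLL {Γ x y A B} : SubT B A → TypL Sg Γ {(y, B)} (.fwdLL x y) x A
  | fwdLS {Γ x y Bh A} : (y, Bh) ∈ Γ → ExtLE Bh A → TypL Sg Γ 0 (.fwdLS x y) x A
  | spawnLL {Γ Δ x X ys vs ws Q z C d} {ybs : List (Chan × STy)} :
      d ∈ Sg.linDefs → d.name = X →
      ys = ybs.map Prod.fst →
      List.Forall₂ (fun (p q : Chan × STy) => SubT p.2 q.2) ybs d.linArgs →
      List.Forall₂ (fun (v : Chan) (q : Chan × STy) =>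
        ∃ Dh, (v, Dh) ∈ Γ ∧ ExtLE Dh q.2) vs d.linArgs2 →
      List.Forall₂ (fun (w : Chan) (q : Chan × STy) =>
        ∃ Eh, (w, Eh) ∈ Γ ∧ ExtSub Eh (.ty q.2)) ws d.shArgs →
      TypL Sg Γ ((x, d.offTy) ::ₘ Δ) Q z C →
      TypL Sg Γ ((↑ybs : Multiset (Chan × STy)) + Δ) (.spawnL x X ys vs ws Q) z C
  | spawnLS {Γ Δ x X ys Q z C d} :
      d ∈ Sg.shDefs → d.name = X →
      List.Forall₂ (fun (y : Chan) (p : Chan × STy) =>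
        ∃ Bh, (y, Bh) ∈ Γ ∧ ExtSub Bh (.ty p.2)) ys d.shArgs →
      TypL Sg ((x, .ty d.offTy) :: Γ) Δ Q z C →
      TypL Sg Γ Δ (.spawnS x X ys Q) z C
  | oneR {Γ x} : TypL Sg Γ 0 (.close x) x .one
  | oneL {Γ Δ x P z C} : TypL Sg Γ Δ P z C →
      TypL Sg Γ ((x, .one) ::ₘ Δ) (.wait x P) z C
  | tensorL {Γ Δ x y A B P z C} :
      TypL Sg Γ ((x, B) ::ₘ (y, A) ::ₘ Δ) P z C →
      TypL Sg Γ ((x, .tensor A B) ::ₘ Δ) (.recvCh y x P) z C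
  | tensorR {Γ Δ x y A A' B P} :
      SubT A' A → TypL Sg Γ Δ P x B →
      TypL Sg Γ ((y, A') ::ₘ Δ) (.sendCh x y P) x (.tensor A B)
  | tensorSR {Γ Δ x y Ah A B P} :
      (y, Ah) ∈ Γ → ExtLE Ah A → TypL Sg Γ Δ P x B →
      TypL Sg Γ Δ (.sendSh x y P) x (.tensor A B)
  | lolliL {Γ Δ x y A A' B P z C} :
      SubT A' A → TypL Sg Γ ((x, B) ::ₘ Δ) P z C →
      TypL Sg Γ ((x, .lolli A B) ::ₘ (y, A') ::ₘ Δ) (.sendCh x y P) z C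
  | lolliR {Γ Δ x y A B P} :
      TypL Sg Γ ((y, A) ::ₘ Δ) P x B →
      TypL Sg Γ Δ (.recvCh y x P) x (.lolli A B)
  | lolliSL {Γ Δ x y Ah A B P z C} :
      (y, Ah) ∈ Γ → ExtLE Ah A → TypL Sg Γ ((x, B) ::ₘ Δ) P z C →
      TypL Sg Γ ((x, .lolli A B) ::ₘ Δ) (.sendSh x y P) z C
  | ichoiceL {Γ Δ x L f M br z C} :
      L ⊆ M → (∀ l ∈ L, TypL Sg Γ ((x, f l) ::ₘ Δ) (br l) z C) →
      TypL Sg Γ ((x, .ichoice L f) ::ₘ Δ) (.branch x M br) z C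
  | ichoiceR {Γ Δ x L f i P} :
      i ∈ L → TypL Sg Γ Δ P x (f i) →
      TypL Sg Γ Δ (.sel x i P) x (.ichoice L f)
  | echoiceL {Γ Δ x L f i P z C} :
      i ∈ L → TypL Sg Γ ((x, f i) ::ₘ Δ) P z C →
      TypL Sg Γ ((x, .echoice L f) ::ₘ Δ) (.sel x i P) z C
  | echoiceR {Γ Δ x L f M br} :
      L ⊆ M → (∀ l ∈ L, TypL Sg Γ Δ (br l) x (f l)) →
      TypL Sg Γ Δ (.branch x M br) x (.echoice L f)
  | upSL {Γ Δ x Ah A y P z C} :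
      (x, Ah) ∈ Γ → ExtSub Ah (.ty (.upS A)) → TypL Sg Γ ((y, A) ::ₘ Δ) P z C →
      TypL Sg Γ Δ (.acqS y x P) z C
  | downSL {Γ Δ x y A P z C} :
      TypL Sg ((y, .ty A) :: Γ) Δ P z C →
      TypL Sg Γ ((x, .downS A) ::ₘ Δ) (.relS y x P) z C
  | downSR {Γ x y A P} :
      TypS Sg Γ P y A → TypL Sg Γ 0 (.detS y x P) x (.downS A)
  | upLL {Γ Δ x y A P z C} :
      TypL Sg Γ ((y, A) ::ₘ Δ) P z C →
      TypL Sg Γ ((x, .upL A) ::ₘ Δ) (.acqL y x P) z C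
  | upLR {Γ Δ x y A P} :
      TypL Sg Γ Δ P y A → TypL Sg Γ Δ (.accL y x P) x (.upL A)
  | downLL {Γ Δ x y A P z C} :
      TypL Sg Γ ((y, A) ::ₘ Δ) P z C →
      TypL Sg Γ ((x, .downL A) ::ₘ Δ) (.relL y x P) z C
  | downLR {Γ Δ x y A P} :
      TypL Sg Γ Δ P y A → TypL Sg Γ Δ (.detL y x P) x (.downL A)
end

/-- Shared process predicates. -/
inductive SPred : Type
  | procS (a : Chan) (P : Proc)
  | unavail (a : Chan)

/-- Linear process predicates. -/
inductive LPred : Type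
  | procL (a : Chan) (P : Proc)
  | connect (a b : Chan)

def SPred.offers : SPred → Chan
  | .procS a _ => a
  | .unavail a => a

def LPred.offers : LPred → Chan
  | .procL a _ => a
  | .connect a _ => a

/-- `Ψ` uses the channel `b`. -/
def LPred.usesChan (b : Chan) : LPred → Prop
  | .procL _ P => P.mentions b
  | .connect _ c => c = b

/-- Linear configuration typing `Γ ⊨ Θ :: Δ` (rules Θ1–Θ3). -/
inductive ThTyp (Sg : Sig) (Γ : SCtx) : List LPred → LCtx → Prop
  | nil : ThTyp Sg Γ [] 0
  | connect {a b Bh A Θ Δ} : (b, Bh) ∈ Γ → ExtLE Bh A → ThTyp Sg Γ Θ Δ →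
      ThTyp Sg Γ (.connect a b :: Θ) ((a, A) ::ₘ Δ)
  | proc {a P A A' Ah Θ Δa Δ} : (a, Ah) ∈ Γ → SSync A' A Ah →
      TypL Sg Γ Δa P a A' → ThTyp Sg Γ Θ (Δa + Δ) →
      ThTyp Sg Γ (.procL a P :: Θ) ((a, A) ::ₘ Δ)

/-- Shared configuration typing `Γ ⊨ Λ :: Γ''` (rules Λ1–Λ4). -/
inductive LamTyp (Sg : Sig) (Γ : SCtx) : List SPred → SCtx → Prop
  | nil : LamTyp Sg Γ [] []
  | procS {a P A A' Λ Γ'} : SSync A' A .top → TypS Sg Γ P a A' →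
      LamTyp Sg Γ Λ Γ' → LamTyp Sg Γ (.procS a P :: Λ) ((a, .ty A) :: Γ')
  | unavail {a Ah Λ Γ'} : LamTyp Sg Γ Λ Γ' →
      LamTyp Sg Γ (.unavail a :: Λ) ((a, Ah) :: Γ')

/-- Configuration typing `Γ ⊨ Λ;Θ :: Δ`. -/
def ConfTyp (Sg : Sig) (Γ : SCtx) (Λ : List SPred) (Θ : List LPred) (Δ : LCtx) : Prop :=
  LamTyp Sg Γ Λ Γ ∧ ThTyp Sg Γ Θ Δ

/-- Well-formedness of the shared fragment. -/
def WfShared (Λ : List SPred) : Prop :=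
  ∀ a, ¬ ((∃ P, SPred.procS a P ∈ Λ) ∧ SPred.unavail a ∈ Λ)

/-- Well-formedness of the linear fragment: each channel is offered at most once. -/
def WfLinear (Θ : List LPred) : Prop := (Θ.map LPred.offers).Nodup

/-- Well-formedness of a configuration `Λ;Θ`. -/
def WfConf (Λ : List SPred) (Θ : List LPred) : Prop :=
  WfShared Λ ∧ WfLinear Θ ∧ ∀ p ∈ Θ, SPred.unavail (LPred.offers p) ∈ Λ

/-- Ordering of shared contexts: `Γ' ⪯ Γ`. -/
def CtxLE (Γ' Γ : SCtx) : Prop :=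
  ∀ x Ah, (x, Ah) ∈ Γ → ∃ Ah', (x, Ah') ∈ Γ' ∧ ExtSub Ah' Ah

noncomputable local instance : DecidableEq STy := Classical.decEq _
noncomputable local instance : DecidableEq (Chan × STy) := Classical.decEq _

theorem subT_trans_aux (A : STy) :
    (∀ B C, SubT A B → SubT B C → SubT A C) ∧
    (∀ B C, SubT B C → SubT C A → SubT B A) := by
  induction A with
  | one =>
    refine ⟨fun B C h1 h2 => ?_, fun B C h1 h2 => ?_⟩
    · cases h1; exact h2
    · cases h2; exact h1
  | tensor A1 A2 ih1 ih2 =>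
    refine ⟨fun B C h1 h2 => ?_, fun B C h1 h2 => ?_⟩
    · cases h1 with
      | tensor ha hb => cases h2 with
        | tensor ha' hb' => exact .tensor (ih1.1 _ _ ha ha') (ih2.1 _ _ hb hb')
    · cases h2 with
      | tensor ha hb => cases h1 with
        | tensor ha' hb' => exact .tensor (ih1.2 _ _ ha' ha) (ih2.2 _ _ hb' hb)
  | lolli A1 A2 ih1 ih2 =>
    refine ⟨fun B C h1 h2 => ?_, fun B C h1 h2 => ?_⟩
    · cases h1 with
      | lolli ha hb => cases h2 with
        | lolli ha' hb' => exact .lolli (ih1.2 _ _ ha' ha) (ih2.1 _ _ hb hb')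
    · cases h2 with
      | lolli ha hb => cases h1 with
        | lolli ha' hb' => exact .lolli (ih1.1 _ _ ha ha') (ih2.2 _ _ hb' hb)
  | ichoice L f ih =>
    refine ⟨fun B C h1 h2 => ?_, fun B C h1 h2 => ?_⟩
    · cases h1 with
      | ichoice hL hf => cases h2 with
        | ichoice hL' hg =>
          exact .ichoice (hL.trans hL') (fun l hl => (ih l).1 _ _ (hf l hl) (hg l (hL hl)))
    · cases h2 with
      | ichoice hL hf => cases h1 with
        | ichoice hL' hg =>
          exact .ichoice (hL'.trans hL) (fun l hl => (ih l).2 _ _ (hg l hl) (hf l (hL' hl)))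
  | echoice L f ih =>
    refine ⟨fun B C h1 h2 => ?_, fun B C h1 h2 => ?_⟩
    · cases h1 with
      | echoice hL hf => cases h2 with
        | echoice hL' hg =>
          exact .echoice (hL'.trans hL) (fun l hl => (ih l).1 _ _ (hf l (hL' hl)) (hg l hl))
    · cases h2 with
      | echoice hL hf => cases h1 with
        | echoice hL' hg =>
          exact .echoice (hL.trans hL') (fun l hl => (ih l).2 _ _ (hg l (hL hl)) (hf l hl))
  | upS A1 ih =>
    refine ⟨fun B C h1 h2 => ?_, fun B C h1 h2 => ?_⟩
    · cases h1 with
      | upS ha => cases h2 with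
        | upS ha' => exact .upS (ih.1 _ _ ha ha')
        | upSL ha' => exact .upSL (ih.1 _ _ ha ha')
      | upSL ha => cases h2 with
        | upL ha' => exact .upSL (ih.1 _ _ ha ha')
    · cases h2 with
      | upS ha => cases h1 with
        | upS ha' => exact .upS (ih.2 _ _ ha' ha)
  | downS A1 ih =>
    refine ⟨fun B C h1 h2 => ?_, fun B C h1 h2 => ?_⟩
    · cases h1 with
      | downS ha => cases h2 with
        | downS ha' => exact .downS (ih.1 _ _ ha ha')
        | downSL ha' => exact .downSL (ih.1 _ _ ha ha')
      | downSL ha => cases h2 with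
        | downL ha' => exact .downSL (ih.1 _ _ ha ha')
    · cases h2 with
      | downS ha => cases h1 with
        | downS ha' => exact .downS (ih.2 _ _ ha' ha)
  | upL A1 ih =>
    refine ⟨fun B C h1 h2 => ?_, fun B C h1 h2 => ?_⟩
    · cases h1 with
      | upL ha => cases h2 with
        | upL ha' => exact .upL (ih.1 _ _ ha ha')
    · cases h2 with
      | upL ha => cases h1 with
        | upL ha' => exact .upL (ih.2 _ _ ha' ha)
        | upSL ha' => exact .upSL (ih.2 _ _ ha' ha)
      | upSL ha => cases h1 with
        | upS ha' => exact .upSL (ih.2 _ _ ha' ha)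
  | downL A1 ih =>
    refine ⟨fun B C h1 h2 => ?_, fun B C h1 h2 => ?_⟩
    · cases h1 with
      | downL ha => cases h2 with
        | downL ha' => exact .downL (ih.1 _ _ ha ha')
    · cases h2 with
      | downL ha => cases h1 with
        | downL ha' => exact .downL (ih.2 _ _ ha' ha)
        | downSL ha' => exact .downSL (ih.2 _ _ ha' ha)
      | downSL ha => cases h1 with
        | downS ha' => exact .downSL (ih.2 _ _ ha' ha)

theorem subT_trans {A B C : STy} (h1 : SubT A B) (h2 : SubT B C) : SubT A C :=
  (subT_trans_aux A).1 B C h1 h2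

theorem extLE_trans {Bh : ExtS} {A B : STy} (h1 : ExtLE Bh A) (h2 : SubT A B) :
    ExtLE Bh B := by
  cases h1 with
  | bot => exact .bot
  | ty h => exact .ty (subT_trans h h2)

theorem ssync_mono {A1 A2 A3 : STy} {Dh : ExtS} (hs : SSync A1 A2 Dh)
    (h2 : SubT A2 A3) : SSync A1 A3 Dh := by
  induction hs generalizing A3 with
  | one => cases h2; exact .one
  | tensor h ih => cases h2 with | tensor hA hB => exact .tensor (ih hB)
  | lolli h ih => cases h2 with | lolli hA hB => exact .lolli (ih hB)
  | ichoice hL hf ih =>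
    cases h2 with
    | ichoice hL' hg => exact .ichoice (hL.trans hL') (fun l hl => ih l hl (hg l (hL hl)))
  | echoice hL hf ih =>
    cases h2 with
    | echoice hL' hg => exact .echoice (hL'.trans hL) (fun l hl => ih l (hL' hl) (hg l hl))
  | upL h ih => cases h2 with | upL h' => exact .upL (ih h')
  | downL h ih => cases h2 with | downL h' => exact .downL (ih h')
  | upS h ih =>
    cases h2 with
    | upS h' => exact .upS (ih h')
    | upSL h' => exact .upSL (ih h')
  | downS h hext ih =>
    cases h2 with
    | downS h' => exact .downS (ih h') hext
    | downSL h' => exact .downSL (ih h') hext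
  | upSL h ih => cases h2 with | upL h' => exact .upSL (ih h')
  | downSL h hext ih => cases h2 with | downL h' => exact .downSL (ih h') hext

/-- Key lemma: any channel in a typed linear context may be retyped at a supertype. -/
theorem thTyp_mem_supertype {Sg : Sig} {Γ : SCtx} {Θ : List LPred} {Δ : LCtx}
    {a : Chan} {A' B : STy}
    (h : ThTyp Sg Γ Θ Δ) (hmem : (a, A') ∈ Δ) (hsub : SubT A' B) :
    ThTyp Sg Γ Θ ((a, B) ::ₘ Δ.erase (a, A')) := by
  induction h with
  | nil => simp at hmem
  | @connect a0 b Bh A0 Θ Δ0 hb hle ht ih =>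
    by_cases hp : (a, A') = (a0, A0)
    · rw [Prod.mk.injEq] at hp
      obtain ⟨rfl, rfl⟩ := hp
      rw [Multiset.erase_cons_head]
      exact .connect hb (extLE_trans hle hsub) ht
    · rw [Multiset.erase_cons_tail_of_mem (by
        rcases Multiset.mem_cons.1 hmem with h | h
        · exact absurd h hp
        · exact h), Multiset.cons_swap]
      exact .connect hb hle (ih (by
        rcases Multiset.mem_cons.1 hmem with h | h
        · exact absurd h hp
        · exact h))
  | @proc a0 P A0' A0 Ah Θ Δa Δ0 hG hss htyp ht ih =>
    by_cases hp : (a, A') = (a0, A0')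
    · rw [Prod.mk.injEq] at hp
      obtain ⟨rfl, rfl⟩ := hp
      rw [Multiset.erase_cons_head]
      exact .proc hG (ssync_mono hss hsub) htyp ht
    · have hmem' : (a, A') ∈ Δ0 := by
        rcases Multiset.mem_cons.1 hmem with h | h
        · exact absurd h hp
        · exact h
      rw [Multiset.erase_cons_tail_of_mem hmem', Multiset.cons_swap]
      have := ih (Multiset.mem_add.2 (Or.inr hmem'))
      rw [Multiset.erase_add_right_pos _ hmem'] at this
      refine .proc hG hss htyp ?_
      have heq : Δa + ((a, B) ::ₘ Δ0.erase (a, A')) =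
          (a, B) ::ₘ (Δa + Δ0.erase (a, A')) := by
        simp [Multiset.cons_swap]
      rw [heq]
      exact this

/-- offering channels may be retyped at supertypes. -/
theorem thTyp_supertype (Sg : Sig) (Γ : SCtx) (Ψa : LPred) (Θ' : List LPred)
    (a : Chan) (A' B : STy) (Δ' : LCtx)
    (hoff : LPred.offers Ψa = a)
    (h : ThTyp Sg Γ (Ψa :: Θ') ((a, A') ::ₘ Δ'))
    (hB : IsLinear B) (hsub : SubT A' B) :
    ThTyp Sg Γ (Ψa :: Θ') ((a, B) ::ₘ Δ') := by
  have := thTyp_mem_supertype h (Multiset.mem_cons_self _ _) hsub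
  rwa [Multiset.erase_cons_head] at this
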